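/- Let (Ω, ℱ, P) be a probability space equipped with a filtration (ℱ_t)_{t∈[0,T]} and a sub-filtration (𝒢_t)_{t∈[0,T]} with 𝒢_t ⊆ ℱ_t for every t. Let W : [0,T] × Ω → ℝʳ be a martingale with respect to (ℱ_t). Let f : [0,T] × Ω → ℝʳ be jointly measurable with E[∫₀ᵀ |f_s| ds] < ∞, and let g : [0,T] × Ω → ℝʳ be jointly measurable and (𝒢_t)-adapted such that for every s ∈ [0,T], g_s is a version of E[f_s | 𝒢_s]. Define N_t = W_t + ∫₀ᵗ (f_s − g_s) ds, and assume that N_t is integrable and 𝒢_t-measurable for every t ∈ [0,T]. Then N is a martingale with respect to (𝒢_t)_{t∈[0,T]}. -/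

import Mathlib

open MeasureTheory intervalIntegral

lemma condexp_component {Ω : Type*} {m m0 : MeasurableSpace Ω} {μ : Measure Ω}
    [IsFiniteMeasure μ] (hm : m ≤ m0) {r : ℕ} (f : Ω → Fin r → ℝ) (hf : Integrable f μ)
    (i : Fin r) :
    (fun ω => (μ[f|m]) ω i) =ᵐ[μ] μ[fun ω => f ω i|m] := by
  haveI : SigmaFinite (μ.trim hm) := inferInstance
  refine ae_eq_condExp_of_forall_setIntegral_eq hm
    ((ContinuousLinearMap.proj (R := ℝ) (φ := fun _ : Fin r => ℝ) i).integrable_comp hf)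
    (fun A _ _ => (((ContinuousLinearMap.proj (R := ℝ) (φ := fun _ : Fin r => ℝ)
      i).integrable_comp (integrable_condExp (f := f) (m := m) (μ := μ))).integrableOn))
    (fun A hA _ => ?_) ?_
  · have h1 := (ContinuousLinearMap.proj (R := ℝ) (φ := fun _ : Fin r => ℝ)
      i).integral_comp_comm ((integrable_condExp (f := f) (m := m) (μ := μ)).integrableOn (s := A))
    have h2 := (ContinuousLinearMap.proj (R := ℝ) (φ := fun _ : Fin r => ℝ)
      i).integral_comp_comm (hf.integrableOn (s := A))
    simp only [ContinuousLinearMap.proj_apply] at h1 h2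
    rw [h1, h2, setIntegral_condExp hm hf hA]
  · exact StronglyMeasurable.aestronglyMeasurable
      (((ContinuousLinearMap.proj (R := ℝ) (φ := fun _ : Fin r => ℝ)
        i).continuous).comp_stronglyMeasurable stronglyMeasurable_condExp)

lemma lintegral_nnnorm_condexp_le {Ω : Type*} {m m0 : MeasurableSpace Ω} {μ : Measure Ω}
    [IsFiniteMeasure μ] {r : ℕ} (f : Ω → Fin r → ℝ) :
    ∫⁻ ω, (‖(μ[f|m]) ω‖₊ : ENNReal) ∂μ ≤ r * ∫⁻ ω, (‖f ω‖₊ : ENNReal) ∂μ := by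
  by_cases hm : m ≤ m0
  swap
  · simp [condExp_of_not_le hm]
  by_cases hf : Integrable f μ
  swap
  · simp [condExp_of_not_integrable hf]
  haveI : SigmaFinite (μ.trim hm) := inferInstance
  calc ∫⁻ ω, (‖(μ[f|m]) ω‖₊ : ENNReal) ∂μ
      ≤ ∫⁻ ω, ∑ i : Fin r, (‖(μ[f|m]) ω i‖₊ : ENNReal) ∂μ := by
        refine lintegral_mono fun ω => ?_
        have h : ‖(μ[f|m]) ω‖₊ ≤ ∑ i : Fin r, ‖(μ[f|m]) ω i‖₊ := by
          rw [Pi.nnnorm_def]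
          exact Finset.sup_le_iff.2 fun i _ => Finset.single_le_sum
            (f := fun i => ‖(μ[f|m]) ω i‖₊) (fun _ _ => zero_le) (Finset.mem_univ i)
        exact (ENNReal.coe_le_coe.2 h).trans_eq (by push_cast; rfl)
    _ = ∑ i : Fin r, ∫⁻ ω, (‖(μ[f|m]) ω i‖₊ : ENNReal) ∂μ := by
        refine lintegral_finset_sum _ fun i _ => ?_
        exact (((stronglyMeasurable_condExp.mono hm).measurable.eval)).nnnorm.coe_nnreal_ennreal
    _ ≤ ∑ _i : Fin r, ∫⁻ ω, (‖f ω‖₊ : ENNReal) ∂μ := by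
        refine Finset.sum_le_sum fun i _ => ?_
        have h1 : ∫⁻ ω, (‖(μ[f|m]) ω i‖₊ : ENNReal) ∂μ
            = ∫⁻ ω, (‖(μ[fun ω => f ω i|m]) ω‖₊ : ENNReal) ∂μ :=
          lintegral_congr_ae ((condexp_component hm f hf i).fun_comp fun x => (‖x‖₊ : ENNReal))
        rw [h1]; simp only [← enorm_eq_nnnorm]; rw [← eLpNorm_one_eq_lintegral_enorm, ← eLpNorm_one_eq_lintegral_enorm]
        refine (eLpNorm_one_condExp_le_eLpNorm _).trans ?_
        rw [eLpNorm_one_eq_lintegral_enorm, eLpNorm_one_eq_lintegral_enorm]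
        refine lintegral_mono fun ω => ?_
        exact ENNReal.coe_le_coe.2 (nnnorm_le_pi_nnnorm (f ω) i)
    _ = r * ∫⁻ ω, (‖f ω‖₊ : ENNReal) ∂μ := by
        simp [Finset.sum_const, nsmul_eq_mul]

theorem stmt6 {Ω : Type*} {m0 : MeasurableSpace Ω} (μ : Measure Ω) [IsProbabilityMeasure μ]
    (T : ℝ) (hT : 0 < T) (r : ℕ)
    (ℱ 𝒢 : ℝ → MeasurableSpace Ω)
    -- (ℱ_t) is a filtration on [0,T], (𝒢_t) a sub-filtration with 𝒢_t ⊆ ℱ_t ⊆ ℱ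
    (hℱle : ∀ t ∈ Set.Icc (0 : ℝ) T, ℱ t ≤ m0)
    (hℱmono : ∀ s ∈ Set.Icc (0 : ℝ) T, ∀ t ∈ Set.Icc (0 : ℝ) T, s ≤ t → ℱ s ≤ ℱ t)
    (h𝒢mono : ∀ s ∈ Set.Icc (0 : ℝ) T, ∀ t ∈ Set.Icc (0 : ℝ) T, s ≤ t → 𝒢 s ≤ 𝒢 t)
    (h𝒢ℱ : ∀ t ∈ Set.Icc (0 : ℝ) T, 𝒢 t ≤ ℱ t)
    -- W is a martingale with respect to (ℱ_t)
    (W : ℝ → Ω → (Fin r → ℝ))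
    (hWadapt : ∀ t ∈ Set.Icc (0 : ℝ) T, StronglyMeasurable[ℱ t] (W t))
    (hWint : ∀ t ∈ Set.Icc (0 : ℝ) T, Integrable (W t) μ)
    (hWmart : ∀ τ ∈ Set.Icc (0 : ℝ) T, ∀ t ∈ Set.Icc (0 : ℝ) T, τ ≤ t →
      μ[W t | ℱ τ] =ᵐ[μ] W τ)
    -- f is jointly measurable with E[∫₀ᵀ |f_s| ds] < ∞
    (f : ℝ → Ω → (Fin r → ℝ)) (hf : Measurable (Function.uncurry f))
    (hfint : (∫⁻ ω, ∫⁻ s in Set.Icc (0 : ℝ) T, (‖f s ω‖₊ : ENNReal) ∂volume ∂μ) < ⊤)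
    -- g is jointly measurable, (𝒢_t)-adapted, and g_s is a version of E[f_s | 𝒢_s]
    (g : ℝ → Ω → (Fin r → ℝ)) (hg : Measurable (Function.uncurry g))
    (hgadapt : ∀ s ∈ Set.Icc (0 : ℝ) T, StronglyMeasurable[𝒢 s] (g s))
    (hgver : ∀ s ∈ Set.Icc (0 : ℝ) T, g s =ᵐ[μ] μ[f s | 𝒢 s])
    -- N_t = W_t + ∫₀ᵗ (f_s − g_s) ds is integrable and 𝒢_t-measurable
    (N : ℝ → Ω → (Fin r → ℝ))
    (hNdef : ∀ t ∈ Set.Icc (0 : ℝ) T, ∀ ω, N t ω = W t ω + ∫ s in (0 : ℝ)..t, (f s ω - g s ω))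
    (hNint : ∀ t ∈ Set.Icc (0 : ℝ) T, Integrable (N t) μ)
    (hNmeas : ∀ t ∈ Set.Icc (0 : ℝ) T, StronglyMeasurable[𝒢 t] (N t)) :
    -- N is a martingale with respect to (𝒢_t): adapted, integrable, and
    -- E[N_t | 𝒢_τ] = N_τ a.s. for all τ ≤ t in [0,T]
    (∀ t ∈ Set.Icc (0 : ℝ) T, StronglyMeasurable[𝒢 t] (N t)) ∧
      (∀ t ∈ Set.Icc (0 : ℝ) T, Integrable (N t) μ) ∧
      (∀ τ ∈ Set.Icc (0 : ℝ) T, ∀ t ∈ Set.Icc (0 : ℝ) T, τ ≤ t →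
        μ[N t | 𝒢 τ] =ᵐ[μ] N τ) := by
  have hm : ∀ u ∈ Set.Icc (0 : ℝ) T, 𝒢 u ≤ m0 := fun u hu => (h𝒢ℱ u hu).trans (hℱle u hu)
  refine ⟨hNmeas, hNint, fun τ hτ t ht hτt => ?_⟩
  haveI : SigmaFinite (μ.trim (hm τ hτ)) := inferInstance
  -- slice measurability
  have hfsm : ∀ ω, Measurable fun s => f s ω :=
    fun ω => hf.comp (measurable_id.prodMk measurable_const)
  have hgsm : ∀ ω, Measurable fun s => g s ω :=
    fun ω => hg.comp (measurable_id.prodMk measurable_const)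
  have hfωm : ∀ s, Measurable (f s) := fun s => hf.comp measurable_prodMk_left
  have hFm : Measurable fun p : Ω × ℝ => (‖f p.2 p.1‖₊ : ENNReal) :=
    (hf.comp measurable_swap).nnnorm.coe_nnreal_ennreal
  have hGm : Measurable fun p : Ω × ℝ => (‖g p.2 p.1‖₊ : ENNReal) :=
    (hg.comp measurable_swap).nnnorm.coe_nnreal_ennreal
  -- swap for f
  have hABf : (∫⁻ ω, ∫⁻ s in Set.Icc (0 : ℝ) T, (‖f s ω‖₊ : ENNReal) ∂volume ∂μ)
      = ∫⁻ s in Set.Icc (0 : ℝ) T, ∫⁻ ω, (‖f s ω‖₊ : ENNReal) ∂μ ∂volume :=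
    lintegral_lintegral_swap hFm.aemeasurable
  have hsf : (∫⁻ s in Set.Icc (0 : ℝ) T, ∫⁻ ω, (‖f s ω‖₊ : ENNReal) ∂μ ∂volume) < ⊤ :=
    hABf ▸ hfint
  -- bound for g
  have hgbd : ∀ s ∈ Set.Icc (0 : ℝ) T,
      (∫⁻ ω, (‖g s ω‖₊ : ENNReal) ∂μ) ≤ r * ∫⁻ ω, (‖f s ω‖₊ : ENNReal) ∂μ := by
    intro s hs
    have h1 : (∫⁻ ω, (‖g s ω‖₊ : ENNReal) ∂μ)
        = ∫⁻ ω, (‖(μ[f s|𝒢 s]) ω‖₊ : ENNReal) ∂μ :=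
      lintegral_congr_ae ((hgver s hs).fun_comp fun x => (‖x‖₊ : ENNReal))
    rw [h1]
    exact lintegral_nnnorm_condexp_le (f s)
  have hsg : (∫⁻ s in Set.Icc (0 : ℝ) T, ∫⁻ ω, (‖g s ω‖₊ : ENNReal) ∂μ ∂volume) < ⊤ := by
    calc (∫⁻ s in Set.Icc (0 : ℝ) T, ∫⁻ ω, (‖g s ω‖₊ : ENNReal) ∂μ ∂volume)
        ≤ ∫⁻ s in Set.Icc (0 : ℝ) T, r * ∫⁻ ω, (‖f s ω‖₊ : ENNReal) ∂μ ∂volume := by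
          refine lintegral_mono_ae ?_
          filter_upwards [ae_restrict_mem measurableSet_Icc] with s hs
          exact hgbd s hs
      _ = r * ∫⁻ s in Set.Icc (0 : ℝ) T, ∫⁻ ω, (‖f s ω‖₊ : ENNReal) ∂μ ∂volume :=
          lintegral_const_mul' _ _ (by simp)
      _ < ⊤ := ENNReal.mul_lt_top (by simp) hsf
  -- g: ae finiteness in ω
  have hABg : (∫⁻ ω, ∫⁻ s in Set.Icc (0 : ℝ) T, (‖g s ω‖₊ : ENNReal) ∂volume ∂μ)
      = ∫⁻ s in Set.Icc (0 : ℝ) T, ∫⁻ ω, (‖g s ω‖₊ : ENNReal) ∂μ ∂volume :=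
    lintegral_lintegral_swap hGm.aemeasurable
  have hgint2 : (∫⁻ ω, ∫⁻ s in Set.Icc (0 : ℝ) T, (‖g s ω‖₊ : ENNReal) ∂volume ∂μ) < ⊤ := by
    rw [hABg]; exact hsg
  have hFmm : Measurable fun ω => ∫⁻ s in Set.Icc (0 : ℝ) T, (‖f s ω‖₊ : ENNReal) ∂volume :=
    Measurable.lintegral_prod_right (f := fun ω s => (‖f s ω‖₊ : ENNReal)) hFm
  have hGmm : Measurable fun ω => ∫⁻ s in Set.Icc (0 : ℝ) T, (‖g s ω‖₊ : ENNReal) ∂volume :=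
    Measurable.lintegral_prod_right (f := fun ω s => (‖g s ω‖₊ : ENNReal)) hGm
  have hfω_fin : ∀ᵐ ω ∂μ, (∫⁻ s in Set.Icc (0 : ℝ) T, (‖f s ω‖₊ : ENNReal) ∂volume) < ⊤ :=
    ae_lt_top hFmm hfint.ne
  have hgω_fin : ∀ᵐ ω ∂μ, (∫⁻ s in Set.Icc (0 : ℝ) T, (‖g s ω‖₊ : ENNReal) ∂volume) < ⊤ :=
    ae_lt_top hGmm hgint2.ne
  -- f: ae integrability in s
  have hfintae : ∀ᵐ s ∂(volume.restrict (Set.Icc (0 : ℝ) T)), Integrable (f s) μ := by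
    filter_upwards [ae_lt_top (Measurable.lintegral_prod_right
      (f := fun s ω => (‖f s ω‖₊ : ENNReal)) hf.nnnorm.coe_nnreal_ennreal) hsf.ne] with s hs
    exact ⟨(hfωm s).aestronglyMeasurable, hs⟩
  -- the interval of interest sits inside [0, T]
  have hIoc_sub : Set.Ioc τ t ⊆ Set.Icc (0 : ℝ) T :=
    fun s hs => ⟨le_trans hτ.1 hs.1.le, hs.2.trans ht.2⟩
  -- auxiliary integral process
  set I : ℝ → Ω → (Fin r → ℝ) := fun u ω => ∫ s in (0 : ℝ)..u, (f s ω - g s ω) with hI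
  have hI_int : ∀ u ∈ Set.Icc (0 : ℝ) T, Integrable (I u) μ := by
    intro u hu
    refine ((hNint u hu).sub (hWint u hu)).congr (ae_of_all _ fun ω => ?_)
    simp only [Pi.sub_apply]
    rw [hNdef u hu ω, add_sub_cancel_left]
  refine (ae_eq_condExp_of_forall_setIntegral_eq (hm τ hτ) (hNint t ht)
    (fun A _ _ => (hNint τ hτ).integrableOn)
    (fun A hA hμA => ?_)
    ((hNmeas τ hτ).aestronglyMeasurable)).symm
  have hA' : MeasurableSet A := hm τ hτ A hA
  have hsplit : ∀ u ∈ Set.Icc (0 : ℝ) T,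
      (∫ ω in A, N u ω ∂μ) = (∫ ω in A, W u ω ∂μ) + ∫ ω in A, I u ω ∂μ := by
    intro u hu
    rw [← integral_add ((hWint u hu).integrableOn) ((hI_int u hu).integrableOn)]
    exact integral_congr_ae (ae_of_all _ fun ω => hNdef u hu ω)
  have hW_eq : (∫ ω in A, W t ω ∂μ) = ∫ ω in A, W τ ω ∂μ := by
    haveI : SigmaFinite (μ.trim (hℱle τ hτ)) := inferInstance
    rw [← setIntegral_condExp (hℱle τ hτ) (hWint t ht) (h𝒢ℱ τ hτ A hA)]
    exact integral_congr_ae (ae_restrict_of_ae (hWmart τ hτ t ht hτt))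
  have hI_eq : (∫ ω in A, I t ω ∂μ) = ∫ ω in A, I τ ω ∂μ := by
    rw [← sub_eq_zero, ← integral_sub ((hI_int t ht).integrableOn) ((hI_int τ hτ).integrableOn)]
    have hptwise : ∀ᵐ ω ∂μ, I t ω - I τ ω = ∫ s in Set.Ioc τ t, (f s ω - g s ω) ∂volume := by
      filter_upwards [hfω_fin, hgω_fin] with ω h1 h2
      have hfi : IntegrableOn (fun s => f s ω) (Set.Icc (0 : ℝ) T) volume :=
        ⟨(hfsm ω).aestronglyMeasurable, h1⟩
      have hgi : IntegrableOn (fun s => g s ω) (Set.Icc (0 : ℝ) T) volume :=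
        ⟨(hgsm ω).aestronglyMeasurable, h2⟩
      have hsub : IntegrableOn (fun s => f s ω - g s ω) (Set.Icc (0 : ℝ) T) volume :=
        hfi.sub hgi
      have hii : ∀ u ∈ Set.Icc (0 : ℝ) T,
          IntervalIntegrable (fun s => f s ω - g s ω) volume 0 u := by
        intro u hu
        refine (hsub.mono_set ?_).intervalIntegrable
        rw [Set.uIcc_of_le hu.1]
        exact Set.Icc_subset_Icc le_rfl hu.2
      have := integral_interval_sub_left (hii t ht) (hii τ hτ)
      simp only [hI]
      rw [this, intervalIntegral.integral_of_le hτt]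
    rw [integral_congr_ae (ae_restrict_of_ae hptwise)]
    -- Fubini
    have hprod : Integrable (Function.uncurry fun ω s => f s ω - g s ω)
        ((μ.restrict A).prod (volume.restrict (Set.Ioc τ t))) := by
      constructor
      · exact ((hf.comp measurable_swap).sub (hg.comp measurable_swap)).aestronglyMeasurable
      · show (∫⁻ p, (‖(Function.uncurry fun ω s => f s ω - g s ω) p‖₊ : ENNReal)
            ∂((μ.restrict A).prod (volume.restrict (Set.Ioc τ t)))) < ⊤
        rw [lintegral_prod (fun p : Ω × ℝ =>
            (‖(Function.uncurry fun ω s => f s ω - g s ω) p‖₊ : ENNReal))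
          (Measurable.aemeasurable (by exact ((hf.comp measurable_swap).sub
            (hg.comp measurable_swap)).nnnorm.coe_nnreal_ennreal))]
        calc (∫⁻ ω in A, ∫⁻ s in Set.Ioc τ t,
              (‖f s ω - g s ω‖₊ : ENNReal) ∂volume ∂μ)
            ≤ ∫⁻ ω, ∫⁻ s in Set.Icc (0 : ℝ) T,
              ((‖f s ω‖₊ : ENNReal) + ‖g s ω‖₊) ∂volume ∂μ := by
              refine le_trans (lintegral_mono' Measure.restrict_le_self le_rfl) ?_
              refine lintegral_mono fun ω => ?_
              refine le_trans (lintegral_mono fun s => ?_)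
                (lintegral_mono' (Measure.restrict_mono hIoc_sub le_rfl) le_rfl)
              exact (ENNReal.coe_le_coe.2 (nnnorm_sub_le _ _)).trans_eq (ENNReal.coe_add _ _)
          _ = (∫⁻ ω, ∫⁻ s in Set.Icc (0 : ℝ) T, (‖f s ω‖₊ : ENNReal) ∂volume ∂μ)
              + ∫⁻ ω, ∫⁻ s in Set.Icc (0 : ℝ) T, (‖g s ω‖₊ : ENNReal) ∂volume ∂μ := by
              rw [← lintegral_add_left hFmm]
              refine lintegral_congr fun ω => ?_
              rw [lintegral_add_left ((hfsm ω).nnnorm.coe_nnreal_ennreal)]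
          _ < ⊤ := ENNReal.add_lt_top.2 ⟨hfint, hgint2⟩
    rw [integral_integral_swap hprod]
    have hzero : ∀ᵐ s ∂(volume.restrict (Set.Ioc τ t)),
        (∫ ω in A, (f s ω - g s ω) ∂μ) = 0 := by
      filter_upwards [ae_restrict_mem measurableSet_Ioc,
        ae_restrict_of_ae_restrict_of_subset hIoc_sub hfintae] with s hs hfs
      have hsIcc : s ∈ Set.Icc (0 : ℝ) T := hIoc_sub hs
      haveI : SigmaFinite (μ.trim (hm s hsIcc)) := inferInstance
      have hgint : Integrable (g s) μ := integrable_condExp.congr (hgver s hsIcc).symm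
      have hA𝒢s : MeasurableSet[𝒢 s] A := h𝒢mono τ hτ s hsIcc hs.1.le A hA
      rw [integral_sub (hfs.integrableOn) (hgint.integrableOn), sub_eq_zero,
        ← setIntegral_condExp (hm s hsIcc) hfs hA𝒢s]
      exact (integral_congr_ae (ae_restrict_of_ae (hgver s hsIcc))).symm
    exact integral_eq_zero_of_ae hzero
  rw [hsplit τ hτ, hsplit t ht, hW_eq, hI_eq]
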